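/- Let A, B, C, E, a, b, c, e be arbitrary real constants and consider the homogeneous quadratic web function f¹ = Ax¹y¹ + Bx¹y² + Cx²y¹ + Ex²y², f² = ax¹y¹ + bx¹y² + cx²y¹ + ex²y². Then: (i) det f̄ = (Ac − Ca)(y¹)² + (Be − Eb)(y²)² + (Ae + Bc − Cb − Ea)y¹y², and det f̃ = (Ab − Ba)(x¹)² + (Ce − Ec)(x²)² + (Ae − Bc + Cb − Ea)x¹x²; (ii) at every point where both of these determinants are nonzero, the connection coefficients are symmetric in their lower indices, Γ^i_{jk} = Γ^i_{kj} for all i,j,k ∈ {1,2} (i.e., the torsion tensor a^i_{jk} vanishes, so the web is isoclinicly geodesic). -/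

import Mathlib

noncomputable section

/-- Points of ℝ⁴ with coordinates (x¹, x², y¹, y²). -/
abbrev Pt : Type := ℝ × ℝ × ℝ × ℝ

/-- Partial derivative with respect to x^j (j = 0 ↦ x¹, j = 1 ↦ x²). -/
def pdx (j : Fin 2) (F : Pt → ℝ) (p : Pt) : ℝ :=
  if j = 0 then deriv (fun t => F (t, p.2.1, p.2.2.1, p.2.2.2)) p.1
  else deriv (fun t => F (p.1, t, p.2.2.1, p.2.2.2)) p.2.1

/-- Partial derivative with respect to y^k (k = 0 ↦ y¹, k = 1 ↦ y²). -/
def pdy (k : Fin 2) (F : Pt → ℝ) (p : Pt) : ℝ :=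
  if k = 0 then deriv (fun t => F (p.1, p.2.1, t, p.2.2.2)) p.2.2.1
  else deriv (fun t => F (p.1, p.2.1, p.2.2.1, t)) p.2.2.2

/-- Jacobian matrix f̄ with entries f̄^i_j = ∂f^i/∂x^j. -/
def fbar (f : Fin 2 → Pt → ℝ) (p : Pt) : Matrix (Fin 2) (Fin 2) ℝ :=
  Matrix.of fun i j => pdx j (f i) p

/-- Jacobian matrix f̃ with entries f̃^i_k = ∂f^i/∂y^k. -/
def ftil (f : Fin 2 → Pt → ℝ) (p : Pt) : Matrix (Fin 2) (Fin 2) ℝ :=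
  Matrix.of fun i k => pdy k (f i) p

/-- Connection coefficients Γ^i_{jk} = −Σ_{l,m} (∂²f^i/∂x^l∂y^m) ḡ^l_j g̃^m_k,
where ḡ = f̄⁻¹ and g̃ = f̃⁻¹. -/
def Gam (f : Fin 2 → Pt → ℝ) (i j k : Fin 2) (p : Pt) : ℝ :=
  - ∑ l : Fin 2, ∑ m : Fin 2,
      pdy m (pdx l (f i)) p * (fbar f p)⁻¹ l j * (ftil f p)⁻¹ m k

/-- Torsion tensor a^i_{jk} = (Γ^i_{jk} − Γ^i_{kj})/2. -/
def tors (f : Fin 2 → Pt → ℝ) (i j k : Fin 2) (p : Pt) : ℝ :=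
  (Gam f i j k p - Gam f i k j p) / 2

/-- The homogeneous quadratic web function. -/
def w (A B C E a b c e : ℝ) : Fin 2 → Pt → ℝ :=
  ![fun p => A * p.1 * p.2.2.1 + B * p.1 * p.2.2.2 + C * p.2.1 * p.2.2.1
      + E * p.2.1 * p.2.2.2,
    fun p => a * p.1 * p.2.2.1 + b * p.1 * p.2.2.2 + c * p.2.1 * p.2.2.1
      + e * p.2.1 * p.2.2.2]

/-!
For a bilinear web function `f(x, y)`, Euler's identity gives `f̄ x = f = f̃ y`, and contracting the
connection with `f` yields `Γ^i_{jk} f^k = -δ^i_j = f^k Γ^i_{kj}`. So each matrix `Γ^i` agrees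
with its transpose on the vector `f ≠ 0`, and in dimension two this forces `Γ^i` to be symmetric.
-/

namespace Matrix

theorem isSymm_of_mulVec_eq_vecMul {K : Type*} [CommRing K] [NoZeroDivisors K]
    {M : Matrix (Fin 2) (Fin 2) K} {v : Fin 2 → K} (hv : v ≠ 0) (h : M *ᵥ v = v ᵥ* M) :
    M.IsSymm := by
  have h0 := congrFun h 0
  have h1 := congrFun h 1
  simp only [mulVec, vecMul, dotProduct, Fin.sum_univ_two] at h0 h1
  have hM : M 0 1 = M 1 0 := by
    by_contra hne
    have hd : M 0 1 - M 1 0 ≠ 0 := sub_ne_zero.mpr hne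
    refine hv (funext fun k => ?_)
    fin_cases k
    · exact (mul_eq_zero.mp (by linear_combination -h1 : v 0 * (M 0 1 - M 1 0) = 0)).resolve_right hd
    · exact (mul_eq_zero.mp (by linear_combination h0 : v 1 * (M 0 1 - M 1 0) = 0)).resolve_right hd
  ext j k
  fin_cases j <;> fin_cases k <;> simp [hM]

end Matrix

section BilinearWeb

open Matrix

variable {n K : Type*} [Fintype n] [CommRing K]

-- `H i` is the coefficient matrix of the component `x ⬝ᵥ H i *ᵥ y` of a bilinear map; its
-- Jacobians in `x` and `y` are the paper's `f̄` and `f̃`.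
def bilinJacX (H : n → Matrix n n K) (y : n → K) : Matrix n n K :=
  .of fun i => H i *ᵥ y

def bilinJacY (H : n → Matrix n n K) (x : n → K) : Matrix n n K :=
  .of fun i => x ᵥ* H i

theorem bilinJacX_mulVec (H : n → Matrix n n K) (x y : n → K) :
    bilinJacX H y *ᵥ x = bilinJacY H x *ᵥ y := by
  ext i
  exact (dotProduct_comm _ _).trans (dotProduct_mulVec x (H i) y)

variable [DecidableEq n]

def bilinConnection (H : n → Matrix n n K) (x y : n → K) (i : n) : Matrix n n K :=
  -((bilinJacX H y)⁻¹ᵀ * H i * (bilinJacY H x)⁻¹)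

variable {H : n → Matrix n n K} {x y : n → K}

theorem bilinConnection_mulVec (hX : IsUnit (bilinJacX H y).det)
    (hY : IsUnit (bilinJacY H x).det) (i : n) :
    bilinConnection H x y i *ᵥ (bilinJacY H x *ᵥ y) = -((1 : Matrix n n K) i) := by
  rw [bilinConnection, neg_mulVec, ← mulVec_mulVec, mulVec_mulVec y (bilinJacY H x)⁻¹,
    nonsing_inv_mul _ hY, one_mulVec, ← mulVec_mulVec]
  change -((bilinJacX H y)⁻¹ᵀ *ᵥ bilinJacX H y i) = _
  rw [mulVec_transpose, ← mul_apply_eq_vecMul, mul_nonsing_inv _ hX]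

theorem bilinConnection_vecMul (hX : IsUnit (bilinJacX H y).det)
    (hY : IsUnit (bilinJacY H x).det) (i : n) :
    (bilinJacX H y *ᵥ x) ᵥ* bilinConnection H x y i = -((1 : Matrix n n K) i) := by
  rw [bilinConnection, vecMul_neg, ← vecMul_vecMul, ← vecMul_vecMul _ (bilinJacX H y)⁻¹ᵀ,
    vecMul_transpose, mulVec_mulVec, nonsing_inv_mul _ hX, one_mulVec]
  change -(bilinJacY H x i ᵥ* _) = _
  rw [← mul_apply_eq_vecMul, mul_nonsing_inv _ hY]

end BilinearWeb

open Matrix in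
theorem bilinConnection_isSymm {K : Type*} [CommRing K] [IsDomain K]
    {H : Fin 2 → Matrix (Fin 2) (Fin 2) K} {x y : Fin 2 → K}
    (hX : IsUnit (bilinJacX H y).det) (hY : IsUnit (bilinJacY H x).det) (i : Fin 2) :
    (bilinConnection H x y i).IsSymm := by
  have hmul := bilinConnection_mulVec hX hY i
  refine isSymm_of_mulVec_eq_vecMul (v := bilinJacY H x *ᵥ y) (fun hv => ?_) ?_
  · simpa [hv] using congrFun hmul i
  · rw [hmul, ← bilinJacX_mulVec, bilinConnection_vecMul hX hY]

theorem deriv_eq_of_affine {F : ℝ → ℝ} {c : ℝ} (h : ∀ t, F t = c * t + F 0) (x : ℝ) :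
    deriv F x = c := by
  rw [funext h]
  simp

section BilinearWebFunction

open Matrix

def xCoord (p : Pt) : Fin 2 → ℝ := ![p.1, p.2.1]

def yCoord (p : Pt) : Fin 2 → ℝ := ![p.2.2.1, p.2.2.2]

def bilinMap (M : Matrix (Fin 2) (Fin 2) ℝ) (p : Pt) : ℝ := xCoord p ⬝ᵥ (M *ᵥ yCoord p)

theorem pdx_bilinMap (M : Matrix (Fin 2) (Fin 2) ℝ) (j : Fin 2) (p : Pt) :
    pdx j (bilinMap M) p = (M *ᵥ yCoord p) j := by
  fin_cases j <;>
  · refine deriv_eq_of_affine (fun t => ?_) _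
    simp [bilinMap, xCoord, yCoord, mulVec, dotProduct, Fin.sum_univ_two]
    ring

theorem pdy_bilinMap (M : Matrix (Fin 2) (Fin 2) ℝ) (k : Fin 2) (p : Pt) :
    pdy k (bilinMap M) p = (xCoord p ᵥ* M) k := by
  fin_cases k <;>
  · refine deriv_eq_of_affine (fun t => ?_) _
    simp [bilinMap, xCoord, yCoord, mulVec, vecMul, dotProduct, Fin.sum_univ_two]
    ring

theorem pdy_dotProduct_yCoord (u : Fin 2 → ℝ) (k : Fin 2) (p : Pt) :
    pdy k (fun p => u ⬝ᵥ yCoord p) p = u k := by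
  fin_cases k <;>
  · refine deriv_eq_of_affine (fun t => ?_) _
    simp [yCoord, dotProduct, Fin.sum_univ_two, add_comm]

theorem pdy_pdx_bilinMap (M : Matrix (Fin 2) (Fin 2) ℝ) (l m : Fin 2) (p : Pt) :
    pdy m (pdx l (bilinMap M)) p = M l m := by
  rw [funext (pdx_bilinMap M l)]
  exact pdy_dotProduct_yCoord (M l) m p

variable (H : Fin 2 → Matrix (Fin 2) (Fin 2) ℝ) (p : Pt)

theorem fbar_bilinMap : fbar (fun i => bilinMap (H i)) p = bilinJacX H (yCoord p) := by
  ext i j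
  exact pdx_bilinMap (H i) j p

theorem ftil_bilinMap : ftil (fun i => bilinMap (H i)) p = bilinJacY H (xCoord p) := by
  ext i k
  exact pdy_bilinMap (H i) k p

theorem Gam_bilinMap (i j k : Fin 2) :
    Gam (fun i => bilinMap (H i)) i j k p = bilinConnection H (xCoord p) (yCoord p) i j k := by
  simp only [Gam, bilinConnection, pdy_pdx_bilinMap, fbar_bilinMap, ftil_bilinMap,
    Matrix.neg_apply, mul_apply, transpose_apply, Finset.sum_mul]
  rw [Finset.sum_comm]
  exact congrArg Neg.neg (Finset.sum_congr rfl fun m _ => Finset.sum_congr rfl fun l _ => by ring)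

end BilinearWebFunction

theorem w_eq_bilinMap (A B C E a b c e : ℝ) :
    w A B C E a b c e = fun i => bilinMap (![!![A, B; C, E], !![a, b; c, e]] i) := by
  funext i p
  fin_cases i <;>
  · simp [w, bilinMap, xCoord, yCoord, Matrix.mulVec, dotProduct, Fin.sum_univ_two]
    ring

theorem stmt_13 (A B C E a b c e x1 x2 y1 y2 : ℝ) :
    (fbar (w A B C E a b c e) (x1, x2, y1, y2)).det
      = (A * c - C * a) * y1 ^ 2 + (B * e - E * b) * y2 ^ 2
        + (A * e + B * c - C * b - E * a) * y1 * y2 ∧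
    (ftil (w A B C E a b c e) (x1, x2, y1, y2)).det
      = (A * b - B * a) * x1 ^ 2 + (C * e - E * c) * x2 ^ 2
        + (A * e - B * c + C * b - E * a) * x1 * x2 ∧
    ((fbar (w A B C E a b c e) (x1, x2, y1, y2)).det ≠ 0 →
     (ftil (w A B C E a b c e) (x1, x2, y1, y2)).det ≠ 0 →
     ∀ i j k : Fin 2,
       Gam (w A B C E a b c e) i j k (x1, x2, y1, y2)
         = Gam (w A B C E a b c e) i k j (x1, x2, y1, y2)) := by
  simp only [w_eq_bilinMap, fbar_bilinMap, ftil_bilinMap, Gam_bilinMap]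
  refine ⟨?_, ?_, fun hX hY i j k => ?_⟩
  · simp [Matrix.det_fin_two, bilinJacX, yCoord]
    ring
  · simp [Matrix.det_fin_two, bilinJacY, xCoord, Matrix.vecMul, dotProduct, Fin.sum_univ_two]
    ring
  · exact (bilinConnection_isSymm hX.isUnit hY.isUnit i).apply k j
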